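/- arXiv:2002.07748 — 5 statements merged into one kernel-verified Lean document; each statement's English description precedes it below -/
import Mathlib

section
/- Safe function elision preserves validation-soundness: if shadow-stack instrumentation is placed exactly on functions not satisfying RA-safety, then for any call stack S = sf₀,...,sfₙ with associated functions f₀,...,fₙ, and any return-address slot sf^ra_i overwritten by the currently executing function f₀, the function fᵢ whose frame was overwritten is instrumented (not elided). -/
/-- Inductively defined unsafe predicate on a call graph. -/
inductive Unsafe {V : Type*} (edge : V → V → Prop) (hasUnsafeWrite : V → Prop) : V → Prop
  | write {f : V} : hasUnsafeWrite f → Unsafe edge hasUnsafeWrite f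
  | call {f g : V} : edge f g → Unsafe edge hasUnsafeWrite g → Unsafe edge hasUnsafeWrite f

/-- Safe function elision preserves validation-soundness: if shadow-stack instrumentation
is placed exactly on the non-RA-safe functions, then for any call stack with functions
f₀,...,fₙ (each fⱼ₊₁ calls fⱼ) where the currently executing f₀ overwrites the return
address of frame i (which entails an intrinsic unsafe write in f₀), the function fᵢ whose
frame was overwritten is instrumented (not elided). -/
theorem safe_function_elision_sound {V : Type*}
    (edge : V → V → Prop) (hasUnsafeWrite : V → Prop) (instrumented : V → Prop)
    -- instrumentation policy: instrument f iff Unsafe f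
    (hpolicy : ∀ f, instrumented f ↔ Unsafe edge hasUnsafeWrite f)
    (n : ℕ) (f : Fin (n + 1) → V)
    -- call chain: each fⱼ₊₁ calls fⱼ
    (hchain : ∀ j : Fin n, edge (f j.succ) (f j.castSucc))
    (i : Fin (n + 1))
    (overwritesRA : Prop)
    -- a write by f₀ to the return address of frame i implies an intrinsic unsafe write in f₀
    (hwrite : overwritesRA → hasUnsafeWrite (f 0))
    (hov : overwritesRA) :
    instrumented (f i) := by
  rw [hpolicy]
  induction i using Fin.induction with
  | zero => exact Unsafe.write (hwrite hov)
  | succ j ih => exact Unsafe.call (hchain j) ih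
end

section
/- In the lowered CFG, every maximal walk starting at the entry of G that reaches G' terminates only at an exit vertex of G', and every exit vertex of G' carries a pop; hence every push on a terminating entry-to-exit walk is followed by exactly one pop. -/
/-- Step k of walk w in the lowered CFG (original = left copy, clone = right copy) is a
push-labelled transition edge if it goes from the original graph into the clone. -/
def crossesAt {V : Type*} {n : ℕ} (w : Fin (n + 1) → V ⊕ V) (k : Fin n) : Prop :=
  (w k.castSucc).isLeft ∧ (w k.succ).isRight

/-- In the lowered CFG, every maximal (terminating) walk starting at the entry of G that
reaches the clone G' terminates at an exit (sink) vertex of G', which carries a pop;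
hence every push on a terminating entry-to-exit walk is followed by exactly one pop. -/
theorem push_followed_by_one_pop {V : Type*}
    (E : V ⊕ V → V ⊕ V → Prop) (pop : V ⊕ V → Prop) (entry : V)
    -- no edges from the clone back to the original graph
    (hback : ∀ u v : V, ¬ E (Sum.inr u) (Sum.inl v))
    -- every sink (exit) vertex of the clone carries a pop
    (hpop : ∀ v : V, (∀ x, ¬ E (Sum.inr v) x) → pop (Sum.inr v))
    (n : ℕ) (w : Fin (n + 1) → V ⊕ V)
    (hentry : w 0 = Sum.inl entry)
    (hwalk : ∀ k : Fin n, E (w k.castSucc) (w k.succ))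
    -- the walk is maximal: it terminates at a sink vertex
    (hsink : ∀ x, ¬ E (w (Fin.last n)) x)
    -- the walk reaches the clone
    (hreach : ∃ k : Fin (n + 1), (w k).isRight) :
    (w (Fin.last n)).isRight ∧ pop (w (Fin.last n)) ∧ (∃! k : Fin n, crossesAt w k) := by
  have step : ∀ k : Fin n, (w k.castSucc).isRight → (w k.succ).isRight := by
    intro k hk
    rcases Sum.isRight_iff.mp hk with ⟨u, hu⟩
    cases h : w k.succ with
    | inl v =>
      have := hwalk k
      rw [hu, h] at this
      exact absurd this (hback u v)
    | inr v => simp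
  have mono : ∀ j : Fin (n + 1), ∀ i ≤ j, (w i).isRight → (w j).isRight := by
    intro j
    induction j using Fin.induction with
    | zero =>
      intro i hi h
      have : i = 0 := le_antisymm hi (Fin.zero_le i)
      rwa [this] at h
    | succ k ih =>
      intro i hi h
      rcases hi.lt_or_eq with h1 | h1
      · exact step k (ih i (Fin.le_castSucc_iff.mpr h1) h)
      · rwa [h1] at h
  obtain ⟨k0, hk0⟩ := hreach
  have hlast : (w (Fin.last n)).isRight := mono (Fin.last n) k0 (Fin.le_last k0) hk0
  obtain ⟨v, hv⟩ := Sum.isRight_iff.mp hlast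
  have hpoplast : pop (w (Fin.last n)) := by
    rw [hv]; exact hpop v (by rw [← hv]; exact hsink)
  refine ⟨hlast, hpoplast, ?_⟩
  have h0 : ¬ (w 0).isRight := by rw [hentry]; simp
  -- existence
  have hex : ∃ k : Fin n, crossesAt w k := by
    by_contra hno
    push_neg at hno
    have back : ∀ j : Fin (n + 1), (w j).isRight → (w 0).isRight := by
      intro j
      induction j using Fin.induction with
      | zero => exact fun h => h
      | succ k ih =>
        intro h
        have hl : ¬ (w k.castSucc).isLeft := fun hL => hno k ⟨hL, h⟩
        exact ih (Sum.not_isLeft.mp hl)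
    exact h0 (back (Fin.last n) hlast)
  obtain ⟨k, hk⟩ := hex
  refine ⟨k, hk, ?_⟩
  have nolt : ∀ k₁ k₂ : Fin n, crossesAt w k₁ → crossesAt w k₂ → ¬ k₁ < k₂ := by
    intro k₁ k₂ h1 h2 hlt
    have hle : k₁.succ ≤ k₂.castSucc := by
      have h' := Fin.lt_def.mp hlt
      rw [Fin.le_def]
      simp only [Fin.val_succ, Fin.coe_castSucc]
      omega
    have := mono k₂.castSucc k₁.succ hle h1.2
    exact (Sum.not_isLeft.mpr this) h2.1
  intro k' hk'
  rcases lt_trichotomy k' k with h | h | h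
  · exact absurd h (nolt k' k hk' hk)
  · exact h
  · exact absurd h (nolt k k' hk hk')
end

section
/- Consider a walk in a CFG whose vertices are labelled push, pop, or neutral, produced by the lowering construction (at most one push, occurring before entry to the clone; pops only at clone exits). Then along any terminating walk the sequence of stack operations is balanced: a pop occurs only if a push occurred earlier, and the counts of pushes and pops are equal (both 0 or both 1). -/
/-- Along any terminating entry-to-sink walk of the lowering construction (pushes only on
G→G' transition edges, pops only at sinks of G', sinks of G unlabelled) the stack
operations are balanced: a pop occurs only if a push occurred earlier, and the counts of
pushes and pops are equal (both 0 or both 1). -/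
theorem stack_ops_balanced {V : Type*}
    (E : V ⊕ V → V ⊕ V → Prop) (entry : V)
    -- no edges from the clone back to the original graph (no walk crosses two transitions)
    (hback : ∀ u v : V, ¬ E (Sum.inr u) (Sum.inl v))
    (n : ℕ) (w : Fin (n + 1) → V ⊕ V)
    (hentry : w 0 = Sum.inl entry)
    (hwalk : ∀ k : Fin n, E (w k.castSucc) (w k.succ))
    -- the walk terminates at a sink vertex (where a pop occurs iff the sink is in G')
    (hsink : ∀ x, ¬ E (w (Fin.last n)) x) :
    -- the pop (ending in G') occurs iff a push occurred earlier on the walk,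
    ((w (Fin.last n)).isRight ↔ ∃ k : Fin n, crossesAt w k) ∧
    -- and there is at most one push, so push and pop counts are equal (both 0 or both 1)
    (∀ j k : Fin n, crossesAt w j → crossesAt w k → j = k) := by
  -- one step: right stays right
  have step : ∀ k : Fin n, (w k.castSucc).isRight → (w k.succ).isRight := by
    intro k hk
    rcases h : w k.succ with v | v
    · obtain ⟨u, hu⟩ := Sum.isRight_iff.mp hk
      exact absurd (h ▸ hu ▸ hwalk k) (hback u v)
    · simp
  -- monotone: right propagates forward
  have mono : ∀ i j : ℕ, (hij : i ≤ j) → (hj : j ≤ n) →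
      (w ⟨i, Nat.lt_succ_of_le (hij.trans hj)⟩).isRight →
      (w ⟨j, Nat.lt_succ_of_le hj⟩).isRight := by
    intro i j hij
    induction j with
    | zero => intro hj h; interval_cases i; exact h
    | succ m ih =>
      intro hj h
      rcases Nat.lt_or_ge i (m + 1) with hlt | hge
      · have hm : m < n := hj
        have := ih (Nat.lt_succ_iff.mp hlt) (le_of_lt hj) h
        have := step ⟨m, hm⟩ this
        exact this
      · have : i = m + 1 := le_antisymm hij hge
        subst this; exact h
  constructor
  · constructor
    · intro hlast
      have hP : ∃ m, ∃ h : m ≤ n, (w ⟨m, Nat.lt_succ_of_le h⟩).isRight := by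
        exact ⟨n, le_rfl, by simpa [Fin.last] using hlast⟩
      classical
      obtain ⟨hm, hmr⟩ := Nat.find_spec hP
      set m := Nat.find hP with hmdef
      have hm0 : m ≠ 0 := by
        intro h
        have h2 : (w ⟨m, Nat.lt_succ_of_le hm⟩).isRight = true := hmr
        rw [show (⟨m, Nat.lt_succ_of_le hm⟩ : Fin (n+1)) = 0 from Fin.ext h, hentry] at h2
        simp at h2
      have hpos : 0 < m := Nat.pos_of_ne_zero hm0
      have hm' : m - 1 < n := by omega
      refine ⟨⟨m - 1, hm'⟩, ?_, ?_⟩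
      · have hmin := Nat.find_min hP (m := m - 1) (by omega)
        push_neg at hmin
        have hnr := hmin (by omega)
        have hcs : (⟨m - 1, hm'⟩ : Fin n).castSucc = ⟨m - 1, Nat.lt_succ_of_le (by omega)⟩ :=
          Fin.ext rfl
        rw [hcs]
        rcases h : w ⟨m - 1, Nat.lt_succ_of_le (by omega : m - 1 ≤ n)⟩ with v | v
        · simp
        · exact absurd (by simp [h]) hnr
      · have hs : (⟨m - 1, hm'⟩ : Fin n).succ = ⟨m, Nat.lt_succ_of_le hm⟩ :=
          Fin.ext (by simp; omega)
        rw [hs]; exact hmr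
    · rintro ⟨k, hl, hr⟩
      have := mono (k.val + 1) n k.2 le_rfl (by simpa [Fin.succ] using hr)
      simpa [Fin.last] using this
  · intro j k hj hk
    by_contra hne
    rcases lt_or_gt_of_ne hne with h | h
    · have hmr := mono (j.val + 1) k.val h (le_of_lt k.2) (by simpa [Fin.succ] using hj.2)
      have h2 : (w k.castSucc).isRight = true := hmr
      obtain ⟨v, hv⟩ := Sum.isLeft_iff.mp hk.1
      rw [hv] at h2; simp at h2
    · have hmr := mono (k.val + 1) j.val h (le_of_lt j.2) (by simpa [Fin.succ] using hk.2)
      have h2 : (w j.castSucc).isRight = true := hmr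
      obtain ⟨v, hv⟩ := Sum.isLeft_iff.mp hj.1
      rw [hv] at h2; simp at h2
end

section
/- For a finite DAG of strongly connected components of a call graph processed in post order (callees before callers), the unsafe predicate computed component-by-component by a worklist algorithm equals the global least fixed point: processing components in reverse topological order yields the same result as iterating the global flow function to fixpoint. -/
open Relation

/-- The global flow operator: F(S) = B ∪ {v : ∃ edge v→w with w ∈ S}. -/
def flowOp {V : Type*} (E : V → V → Prop) (B : Set V) (S : Set V) : Set V :=
  B ∪ {v | ∃ w, E v w ∧ w ∈ S}

/-- The local least fixed point within the SCC of rank i, given the already-final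
results `prev` of callee SCCs (computed as the intersection of all local prefixed
points). -/
def localFix {V : Type*} (E : V → V → Prop) (B : Set V) (rank : V → ℕ)
    (i : ℕ) (prev : Set V) : Set V :=
  ⋂₀ {S : Set V | {v | rank v = i ∧ (v ∈ B ∨ ∃ w, E v w ∧ (w ∈ S ∨ w ∈ prev))} ⊆ S}

/-- Component-by-component computation, processing SCCs in post order
(callees before callers). -/
def stage {V : Type*} (E : V → V → Prop) (B : Set V) (rank : V → ℕ) : ℕ → Set V
  | 0 => localFix E B rank 0 ∅
  | n + 1 => stage E B rank n ∪ localFix E B rank (n + 1) (stage E B rank n)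

section Aux
variable {V : Type*} (E : V → V → Prop) (B : Set V) (rank : V → ℕ)

/-- The "previous" accumulated set before processing rank `n`. -/
def prevSet : ℕ → Set V
  | 0 => ∅
  | n + 1 => stage E B rank n

lemma stage_eq (n : ℕ) :
    stage E B rank n = prevSet E B rank n ∪ localFix E B rank n (prevSet E B rank n) := by
  cases n with
  | zero => simp [stage, prevSet]
  | succ k => rfl

variable {E B rank}

lemma rank_of_mem_localFix {i : ℕ} {p : Set V} {v : V}
    (h : v ∈ localFix E B rank i p) : rank v = i :=
  h {u | rank u = i} (fun _ hu => hu.1)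

lemma mem_localFix_of_base {i : ℕ} {p : Set V} {v : V}
    (hr : rank v = i) (hv : v ∈ B) : v ∈ localFix E B rank i p :=
  fun S hS => hS ⟨hr, Or.inl hv⟩

lemma mem_localFix_of_prev {i : ℕ} {p : Set V} {v w : V}
    (hr : rank v = i) (hE : E v w) (hw : w ∈ p) : v ∈ localFix E B rank i p :=
  fun S hS => hS ⟨hr, Or.inr ⟨w, hE, Or.inr hw⟩⟩

lemma mem_localFix_of_step {i : ℕ} {p : Set V} {v w : V}
    (hr : rank v = i) (hE : E v w) (hw : w ∈ localFix E B rank i p) :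
    v ∈ localFix E B rank i p :=
  fun S hS => hS ⟨hr, Or.inr ⟨w, hE, Or.inl (hw S hS)⟩⟩

lemma localFix_subset_prefixed {i : ℕ} {p S : Set V}
    (hS : flowOp E B S ⊆ S) (hp : p ⊆ S) : localFix E B rank i p ⊆ S := by
  intro v hv
  refine hv S ?_
  rintro u ⟨-, hu | ⟨w, hE, hw | hw⟩⟩
  · exact hS (Or.inl hu)
  · exact hS (Or.inr ⟨w, hE, hw⟩)
  · exact hS (Or.inr ⟨w, hE, hp hw⟩)

lemma stage_subset_prefixed {S : Set V} (hS : flowOp E B S ⊆ S) :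
    ∀ n, stage E B rank n ⊆ S := by
  intro n
  induction n with
  | zero => exact localFix_subset_prefixed hS (Set.empty_subset S)
  | succ k ih => exact Set.union_subset ih (localFix_subset_prefixed hS ih)

lemma stage_mono : ∀ {m n : ℕ}, m ≤ n → stage E B rank m ⊆ stage E B rank n := by
  intro m n h
  induction h with
  | refl => exact subset_rfl
  | step h ih => exact ih.trans Set.subset_union_left

lemma mem_stage_elim {n : ℕ} {v : V} (h : v ∈ stage E B rank n) :
    ∃ i ≤ n, v ∈ localFix E B rank i (prevSet E B rank i) := by
  induction n with
  | zero => exact ⟨0, le_refl 0, h⟩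
  | succ k ih =>
    rcases h with h | h
    · rcases ih h with ⟨i, hi, hv⟩
      exact ⟨i, hi.trans (Nat.le_succ k), hv⟩
    · exact ⟨k + 1, le_refl _, h⟩

end Aux

/-- For a finite DAG of SCCs of a call graph processed in post order (callees before
callers), the unsafe predicate computed component-by-component equals the global least
fixed point of the flow operator. -/
theorem componentwise_eq_global_lfp {V : Type*} [Fintype V]
    (E : V → V → Prop) (B : Set V) (rank : V → ℕ)
    -- rank is a topological numbering of the condensation, callees first
    (htopo : ∀ v w, E v w → rank w ≤ rank v)
    -- vertices have equal rank iff they are in the same SCC (mutually reachable)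
    (hscc : ∀ v w, rank v = rank w ↔ (ReflTransGen E v w ∧ ReflTransGen E w v)) :
    (⋃ i : ℕ, stage E B rank i) = ⋂₀ {S : Set V | flowOp E B S ⊆ S} := by
  apply subset_antisymm
  · intro v hv
    rw [Set.mem_sInter]
    intro S hS
    obtain ⟨n, hn⟩ := Set.mem_iUnion.1 hv
    exact stage_subset_prefixed hS n hn
  · -- it suffices to show the union of stages is a prefixed point
    apply Set.sInter_subset_of_mem
    intro v hv
    rw [Set.mem_iUnion]
    rcases hv with hv | ⟨w, hE, hw⟩
    · -- base case: v ∈ B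
      refine ⟨rank v, ?_⟩
      rw [stage_eq]
      exact Or.inr (mem_localFix_of_base rfl hv)
    · -- step case: edge v → w with w already computed
      obtain ⟨n, hn⟩ := Set.mem_iUnion.1 hw
      obtain ⟨j, -, hwl⟩ := mem_stage_elim hn
      have hjw : rank w = j := rank_of_mem_localFix hwl
      rcases lt_or_eq_of_le (htopo v w hE) with hlt | heq
      · -- w in a strictly earlier SCC
        obtain ⟨k, hk⟩ : ∃ k, rank v = k + 1 :=
          ⟨rank v - 1, by omega⟩
        have hwst : w ∈ stage E B rank k := by
          have h1 : w ∈ stage E B rank j := by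
            rw [stage_eq]; exact Or.inr hwl
          exact stage_mono (by omega) h1
        refine ⟨k + 1, Or.inr (mem_localFix_of_prev hk hE ?_)⟩
        exact hwst
      · -- w in the same SCC
        refine ⟨rank v, ?_⟩
        rw [stage_eq]
        refine Or.inr (mem_localFix_of_step rfl hE ?_)
        rw [← heq, hjw]
        exact hwl
end

section
/- Validation-soundness of safe path elision: assume every function's CFG is lowered so that every entry-to-exit walk containing an unsafe block crosses exactly one push-pop pair covering its tainted region, and a block ending in a call to an unsafe function is itself unsafe. Then for any call stack with walks w₀,...,wₙ executed in frames 0..n, if f₀ overwrites the return address of frame i, the walk wᵢ contains an unsafe block and hence its (extended) tainted region is covered by a shadow-stack check. -/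
/-- Validation-soundness of safe path elision. Model: a call stack with frames 0..n,
function fᵢ executing the per-frame CFG walk wᵢ (a list of basic blocks); for i ≥ 1 the
walk wᵢ ends at a block that calls fᵢ₋₁, and such a block is unsafe whenever its callee
is unsafe; a function is unsafe when some executed block of it is unsafe; by the lowering
guarantee, every walk containing an unsafe block has its (extended) tainted region
covered by a shadow-stack check. If f₀ overwrites the return address of frame i (which
entails an unsafe block in w₀), then the walk wᵢ contains an unsafe block and is covered
by a shadow-stack check. -/
theorem safe_path_elision_sound {Block Func : Type*}
    (unsafeBlock : Block → Prop) (UnsafeF : Func → Prop) (Covered : List Block → Prop)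
    (n : ℕ) (fns : Fin (n + 1) → Func) (walks : Fin (n + 1) → List Block)
    -- a function executing a walk containing an unsafe block is unsafe
    (hfun : ∀ i : Fin (n + 1), (∃ b ∈ walks i, unsafeBlock b) → UnsafeF (fns i))
    -- each walk wᵢ₊₁ ends at a block calling fᵢ; that block is unsafe if fᵢ is unsafe
    (hcall : ∀ i : Fin n, ∃ b ∈ walks i.succ, (UnsafeF (fns i.castSucc) → unsafeBlock b))
    -- lowering guarantee: any walk with an unsafe block is covered by a shadow-stack check
    (hlower : ∀ w : List Block, (∃ b ∈ w, unsafeBlock b) → Covered w)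
    (i : Fin (n + 1))
    (overwritesRA : Prop)
    -- an overwrite of frame i's return address by f₀ implies f₀ executes an unsafe block
    (hwrite : overwritesRA → ∃ b ∈ walks 0, unsafeBlock b)
    (hov : overwritesRA) :
    (∃ b ∈ walks i, unsafeBlock b) ∧ Covered (walks i) := by
  have key : ∀ m : ℕ, ∀ hm : m < n + 1, ∃ b ∈ walks ⟨m, hm⟩, unsafeBlock b := by
    intro m
    induction m with
    | zero => intro hm; exact hwrite hov
    | succ k ih =>
      intro hm
      have hk : k < n + 1 := Nat.lt_of_succ_lt hm
      have hu := hfun ⟨k, hk⟩ (ih hk)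
      obtain ⟨b, hb, himp⟩ := hcall ⟨k, Nat.lt_of_succ_lt_succ hm⟩
      exact ⟨b, hb, himp hu⟩
  have h := key i.1 i.2
  have : (⟨i.1, i.2⟩ : Fin (n+1)) = i := rfl
  rw [this] at h
  exact ⟨h, hlower _ h⟩
end
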